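/- Let K be a field of characteristic zero, k ∈ ℕ, j ∈ ℕ₀, ε, b ∈ ℚ with ε > 0 and b > 0, c ∈ ℚ, and set a := (j/k)·b + ε. Suppose f, g ∈ K[x] are nonzero with f(0) ≠ 0 and g(0) ≠ 0, and that there exists h ∈ ℕ₀ such that x^h·f^{k+j} = c·f^k·g + a·x·(f^k)′·g − b·x·g′·f^k, where ′ denotes the formal derivative. Then every irreducible factor u of f, with multiplicity m_u in f, has multiplicity j·m_u + 1 in g; consequently g = f^j·ḡ for some separable (i.e. squarefree) polynomial ḡ ∈ K[x], and the number of distinct irreducible factors of f is at most the degree of ḡ. -/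

import Mathlib

open scoped BigOperators
open scoped Classical

noncomputable section

namespace Dixmier

variable (K : Type*) [Field K] [CharZero K]

/-- Laurent polynomials `K[t,t⁻¹]`. -/
abbrev Laur (K : Type*) [Field K] := LaurentPolynomial K

/-- The `K`-linear endomorphisms of `K[t,t⁻¹]`. -/
abbrev E (K : Type*) [Field K] := Module.End K (Laur K)

/-- Multiplication by `t^i`, i.e. the element `X^{i/l}` of `A₁⁽ˡ⁾`. -/
def Xpow (i : ℤ) : E K := LinearMap.mulLeft K (LaurentPolynomial.T i)

/-- The operator `Y = (1/l)·t^{1-l}·d/dt` of `A₁⁽ˡ⁾`; it maps `t^n ↦ (n/l)·t^{n-l}`. -/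
def Yop (l : ℕ) : E K :=
  Finsupp.linearCombination K (fun n : ℤ =>
    algebraMap ℚ K ((n : ℚ) / (l : ℚ)) • LaurentPolynomial.T (n - (l : ℤ)))
    ∘ₗ (AddMonoidAlgebra.coeffLinearEquiv K).toLinearMap

/-- The algebra `A₁⁽ˡ⁾`: the subalgebra of endomorphisms of `K[t,t⁻¹]` generated by
multiplication by `t`, multiplication by `t⁻¹`, and `Y`. -/
def A1 (l : ℕ) : Subalgebra K (E K) :=
  Algebra.adjoin K {Xpow K 1, Xpow K (-1), Yop K l}

/-- The Weyl algebra `A₁`, identified with its copy inside `A₁⁽¹⁾`. -/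
def Weyl : Subalgebra K (E K) :=
  Algebra.adjoin K {Xpow K 1, Yop K 1}

/-- Interpretation of a coefficient family: `f ↦ ∑ f (i,j) • X^{i/l} Y^j`. -/
def toEnd (l : ℕ) : ((ℤ × ℕ) →₀ K) →ₗ[K] E K :=
  Finsupp.linearCombination K fun p : ℤ × ℕ => Xpow K p.1 * Yop K l ^ p.2

/-- The (unique) coefficient family representing `P ∈ A₁⁽ˡ⁾`. -/
def rep (l : ℕ) (P : E K) : (ℤ × ℕ) →₀ K :=
  if h : ∃ f, toEnd K l f = P then h.choose else 0

/-- The point `(i/l, j) ∈ ℚ²` attached to an exponent pair `(i,j)`. -/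
def pt (l : ℕ) (p : ℤ × ℕ) : ℚ × ℚ := ((p.1 : ℚ) / (l : ℚ), (p.2 : ℚ))

/-- The set of points `(i/l, j) ∈ ℚ²` in the support of a coefficient family. -/
def suppPts (l : ℕ) (f : (ℤ × ℕ) →₀ K) : Set (ℚ × ℚ) :=
  pt l '' (f.support : Set (ℤ × ℕ))

/-- The support of `P ∈ A₁⁽ˡ⁾`, as a subset of `(1/l)ℤ × ℕ₀ ⊆ ℚ²`. -/
def Supp (l : ℕ) (P : E K) : Set (ℚ × ℚ) := suppPts K l (rep K l P)

/-- `v_{ρ,σ}` on points of `ℚ²`. -/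
def vp (ρ σ : ℤ) (q : ℚ × ℚ) : ℚ := ρ * q.1 + σ * q.2

/-- `v_{ρ,σ}(P) ∈ WithBot ℚ` (with `v_{ρ,σ}(0) = ⊥ = -∞`). -/
def vdeg (ρ σ : ℤ) (l : ℕ) (P : E K) : WithBot ℚ :=
  (rep K l P).support.sup fun p => (vp ρ σ (pt l p) : WithBot ℚ)

/-- The coefficient family of the `(ρ,σ)`-leading part of `P`. -/
def ltRep (ρ σ : ℤ) (l : ℕ) (P : E K) : (ℤ × ℕ) →₀ K :=
  (rep K l P).filter fun p => (vp ρ σ (pt l p) : WithBot ℚ) = vdeg K ρ σ l P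

/-- The commutative algebra `L⁽ˡ⁾ = K[x^{1/l}, x^{-1/l}, y]`; the monomial `x^{i/l}·y^j`
corresponds to the exponent pair `(i,j) ∈ ℤ × ℕ`. -/
abbrev Lalg (K : Type*) [Field K] := AddMonoidAlgebra K (ℤ × ℕ)

/-- The `(ρ,σ)`-leading term `ℓ_{ρ,σ}(P) ∈ L⁽ˡ⁾`. -/
def ell (ρ σ : ℤ) (l : ℕ) (P : E K) : Lalg K := AddMonoidAlgebra.ofCoeff (ltRep K ρ σ l P)

/-- `R ∈ L⁽ˡ⁾` is `(ρ,σ)`-homogeneous: it is `0` or equal to its own leading term. -/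
def IsHomogL (ρ σ : ℤ) (l : ℕ) (R : Lalg K) : Prop :=
  ∀ p ∈ R.coeff.support, ∀ q ∈ R.coeff.support, vp ρ σ (pt l p) = vp ρ σ (pt l q)

/-- `F ∈ A₁⁽ˡ⁾` is `(ρ,σ)`-homogeneous. -/
def IsHomogE (ρ σ : ℤ) (l : ℕ) (F : E K) : Prop :=
  ∀ p ∈ (rep K l F).support, ∀ q ∈ (rep K l F).support,
    vp ρ σ (pt l p) = vp ρ σ (pt l q)

/-- `q` is the point of `Supp(ℓ_{ρ,σ}(P))` at which `v_{1,-1}` is maximal. -/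
def IsStOf (ρ σ : ℤ) (l : ℕ) (P : E K) (q : ℚ × ℚ) : Prop :=
  q ∈ suppPts K l (ltRep K ρ σ l P) ∧
    ∀ q' ∈ suppPts K l (ltRep K ρ σ l P), vp 1 (-1) q' ≤ vp 1 (-1) q

/-- `st_{ρ,σ}(P)`. -/
def stP (ρ σ : ℤ) (l : ℕ) (P : E K) : ℚ × ℚ :=
  if h : ∃ q, IsStOf K ρ σ l P q then h.choose else 0

/-- `q` is the point of `Supp(ℓ_{ρ,σ}(P))` at which `v_{-1,1}` is maximal. -/
def IsEnOf (ρ σ : ℤ) (l : ℕ) (P : E K) (q : ℚ × ℚ) : Prop :=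
  q ∈ suppPts K l (ltRep K ρ σ l P) ∧
    ∀ q' ∈ suppPts K l (ltRep K ρ σ l P), vp (-1) 1 q' ≤ vp (-1) 1 q

/-- `en_{ρ,σ}(P)`. -/
def enP (ρ σ : ℤ) (l : ℕ) (P : E K) : ℚ × ℚ :=
  if h : ∃ q, IsEnOf K ρ σ l P q then h.choose else 0

/-- `w(P)`: the point of `Supp(ℓ_{1,-1}(P))` with maximal first coordinate. -/
def IsWOf (l : ℕ) (P : E K) (q : ℚ × ℚ) : Prop :=
  q ∈ suppPts K l (ltRep K 1 (-1) l P) ∧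
    ∀ q' ∈ suppPts K l (ltRep K 1 (-1) l P), q'.1 ≤ q.1

def wP (l : ℕ) (P : E K) : ℚ × ℚ :=
  if h : ∃ q, IsWOf K l P q then h.choose else 0

/-- `w̄(P)`: the point of `Supp(ℓ_{-1,1}(P))` with maximal first coordinate. -/
def IsWBarOf (l : ℕ) (P : E K) (q : ℚ × ℚ) : Prop :=
  q ∈ suppPts K l (ltRep K (-1) 1 l P) ∧
    ∀ q' ∈ suppPts K l (ltRep K (-1) 1 l P), q'.1 ≤ q.1

def wBarP (l : ℕ) (P : E K) : ℚ × ℚ :=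
  if h : ∃ q, IsWBarOf K l P q then h.choose else 0

/-- The cross product `A × B` on `ℚ²`. -/
def cross (A B : ℚ × ℚ) : ℚ := A.1 * B.2 - A.2 * B.1

/-- The set of directions `𝔙̄`. -/
def VBar (ρ σ : ℤ) : Prop := Int.gcd ρ σ = 1 ∧ 0 ≤ ρ + σ

/-- The set of directions `𝔙`. -/
def V (ρ σ : ℤ) : Prop := Int.gcd ρ σ = 1 ∧ 0 < ρ + σ

/-- The set of directions `𝔙⁰`. -/
def V0 (ρ σ : ℤ) : Prop := V ρ σ ∧ 0 < ρ

/-- The order on directions: `(1,-1)` is smallest, `(-1,1)` is largest, and otherwise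
`(ρ,σ) < (ρ',σ')` iff `ρσ' - σρ' > 0`. -/
def dirLt (ρ σ ρ' σ' : ℤ) : Prop :=
  ((ρ, σ) = ((1 : ℤ), (-1 : ℤ)) ∧ (ρ', σ') = ((-1 : ℤ), (1 : ℤ))) ∨ 0 < ρ * σ' - σ * ρ'

/-- The commutator `[P,Q] = PQ - QP`. -/
def brk (P Q : E K) : E K := P * Q - Q * P

/-- `P` and `Q` are `(ρ,σ)`-proportional:
`v_{ρ,σ}([P,Q]) < v_{ρ,σ}(P) + v_{ρ,σ}(Q) - (ρ+σ)`. -/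
def Proportional (ρ σ : ℤ) (l : ℕ) (P Q : E K) : Prop :=
  vdeg K ρ σ l (brk K P Q) + (((ρ : ℚ) + (σ : ℚ) : ℚ) : WithBot ℚ)
    < vdeg K ρ σ l P + vdeg K ρ σ l Q

/-- The `(ρ,σ)`-bracket `[P,Q]_{ρ,σ} ∈ L⁽ˡ⁾`. -/
def rsBrk (ρ σ : ℤ) (l : ℕ) (P Q : E K) : Lalg K :=
  if Proportional K ρ σ l P Q then 0 else ell K ρ σ l (brk K P Q)

/-- `(ρ,σ) ∈ Dir(P)`. -/
def InDir (ρ σ : ℤ) (l : ℕ) (P : E K) : Prop :=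
  V ρ σ ∧ 1 < (ltRep K ρ σ l P).support.card

/-- `(ρ,σ) ∈ Dir̄(P)`. -/
def InDirBar (ρ σ : ℤ) (l : ℕ) (P : E K) : Prop :=
  InDir K ρ σ l P ∨ (ρ, σ) = ((1 : ℤ), (-1 : ℤ)) ∨ (ρ, σ) = ((-1 : ℤ), (1 : ℤ))

/-- The minimal second exponent occurring in a coefficient family. -/
def minSnd (f : (ℤ × ℕ) →₀ K) : ℕ :=
  if h : f.support.Nonempty then (f.support.image Prod.snd).min' (h.image _) else 0

/-- The univariate polynomial `f_{P,ρ,σ} ∈ K[x]`: writing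
`ℓ_{ρ,σ}(P) = ∑_{i=0}^{γ} a_i·x^{r/l - iσ/ρ}·y^{s+i}`, it is `∑ a_i·xⁱ`. -/
def fPol (ρ σ : ℤ) (l : ℕ) (P : E K) : Polynomial K :=
  ∑ p ∈ (ltRep K ρ σ l P).support,
    Polynomial.C (ltRep K ρ σ l P p) *
      Polynomial.X ^ (p.2 - minSnd K (ltRep K ρ σ l P))

/-- The total degree `v_{1,1}(P)` of an element of the Weyl algebra, as a natural number. -/
def tdeg (P : E K) : ℕ :=
  (rep K 1 P).support.sup fun p => p.1.toNat + p.2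

/-- `(P,Q)` is a counterexample to the Dixmier conjecture: `[Q,P] = 1` but `P` and `Q`
do not generate the Weyl algebra `A₁` over `K`. -/
def IsCounterexample (P Q : E K) : Prop :=
  P ∈ Weyl K ∧ Q ∈ Weyl K ∧ brk K Q P = 1 ∧ Algebra.adjoin K {P, Q} ≠ Weyl K

/-- A minimal pair: a counterexample minimizing `gcd(v_{1,1}(P), v_{1,1}(Q))`. -/
def IsMinimalPair (P Q : E K) : Prop :=
  IsCounterexample K P Q ∧
    ∀ P' Q' : E K, IsCounterexample K P' Q' →
      Nat.gcd (tdeg K P) (tdeg K Q) ≤ Nat.gcd (tdeg K P') (tdeg K Q')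

/-- `P` is subrectangular (with some vertex `(a,b) ∈ ℕ × ℕ`). -/
def Subrectangular (P : E K) : Prop :=
  ∃ a b : ℕ, 0 < a ∧ 0 < b ∧ ((a : ℚ), (b : ℚ)) ∈ Supp K 1 P ∧
    ∀ q ∈ Supp K 1 P, 0 ≤ q.1 ∧ q.1 ≤ (a : ℚ) ∧ 0 ≤ q.2 ∧ q.2 ≤ (b : ℚ)

/-- A standard minimal pair. -/
def IsStandardMinimalPair (P Q : E K) : Prop :=
  IsMinimalPair K P Q ∧ Subrectangular K P ∧ Subrectangular K Q ∧
    vp 1 (-1) (stP K 1 0 1 P) < 0 ∧ vp 1 (-1) (stP K 1 0 1 Q) < 0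

/-- The commutative algebra of "polynomials" with exponents in `ℚ²`, used to express
monomials such as `x^{r/l - iσ/ρ}·y^{s+i}`. -/
abbrev LQ (K : Type*) [Field K] := AddMonoidAlgebra K (ℚ × ℚ)

/-- The embedding of `L⁽ˡ⁾` into `LQ`, sending `x^{i/l}·y^j` to the monomial with
exponent `(i/l, j)`. -/
def toLQ (l : ℕ) (R : Lalg K) : LQ K := AddMonoidAlgebra.ofCoeff (Finsupp.mapDomain (pt l) R.coeff)

/-- The generalized binomial coefficient `binom(q,k) = q(q-1)⋯(q-k+1)/k!`. -/
def qchoose (q : ℚ) (k : ℕ) : ℚ :=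
  (∏ m ∈ Finset.range k, (q - (m : ℚ))) / (k.factorial : ℚ)

end Dixmier

end

/-!
Fix an irreducible `u` dividing `f g`; it does not divide `x` since `f(0), g(0) ≠ 0`. Write
`f = u^m F`, `g = u^n G` with `u ∤ F, G`. Multiplied by `u`, the right-hand side becomes
`u^(mk+n) ((a·mk - b·n)·x·u'·F^k·G + u·(…))`, the left-hand side `u^((k+j)m+1)` times a
factor prime to `u`. In characteristic zero `u ∤ u'`, so either `a·mk ≠ b·n` and comparing
exponents gives `n = jm + 1`, or `a·mk = b·n` and `n ≤ jm`, which `a > (j/k)·b` only allows for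
`m = n = 0`. Hence `f^j ∣ g`, and `ḡ = g / f^j` contains every irreducible factor of `f g`
exactly once.
-/

open Polynomial UniqueFactorizationMonoid

theorem Prime.le_of_pow_mul_eq_pow_mul {M : Type*} [CommMonoidWithZero M] [IsCancelMulZero M]
    {p V W : M} {s t : ℕ} (hp : Prime p) (hV : ¬p ∣ V) (h : p ^ s * V = p ^ t * W) : t ≤ s :=
  (pow_dvd_pow_iff hp.ne_zero hp.not_isUnit).mp
    (hp.pow_dvd_of_dvd_mul_right _ hV (Dvd.intro W h.symm))

namespace Polynomial

theorem mul_derivative_pow_mul {R : Type*} [CommRing R] (u G : R[X]) (n : ℕ) :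
    u * derivative (u ^ n * G) = u ^ n * (n * derivative u * G + u * derivative G) := by
  cases n with
  | zero => simp
  | succ n => rw [derivative_mul, derivative_pow, C_eq_natCast]; push_cast; ring

variable {K : Type*} [Field K]

theorem _root_.Irreducible.not_dvd_derivative [CharZero K] {u : K[X]} (hu : Irreducible u) :
    ¬u ∣ derivative u := by
  rw [dvd_derivative_iff, derivative_eq_zero]
  exact hu.natDegree_pos.ne'

theorem _root_.Irreducible.not_dvd_X_of_dvd {u f : K[X]} (hu : Irreducible u)
    (hf0 : f.eval 0 ≠ 0) (huf : u ∣ f) : ¬u ∣ X := fun huX => by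
  have hXf : X ∣ f := (hu.associated_of_dvd irreducible_X huX).symm.dvd.trans huf
  exact hf0 (by rwa [X_dvd_iff, coeff_zero_eq_eval_zero] at hXf)

theorem card_normalizedFactors_le_natDegree (p : K[X]) :
    Multiset.card (normalizedFactors p) ≤ p.natDegree := by
  rcases eq_or_ne p 0 with rfl | hp
  · simp
  calc Multiset.card (normalizedFactors p)
      ≤ ((normalizedFactors p).map natDegree).sum := by
        simpa using Multiset.card_nsmul_le_sum (s := (normalizedFactors p).map natDegree)
          (a := 1) fun d hd => by
            obtain ⟨q, hq, rfl⟩ := Multiset.mem_map.mp hd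
            exact (irreducible_of_normalized_factor q hq).natDegree_pos
    _ = (normalizedFactors p).prod.natDegree :=
        (natDegree_multiset_prod _ (zero_notMem_normalizedFactors _)).symm
    _ ≤ p.natDegree := natDegree_le_of_dvd (prod_normalizedFactors hp).dvd hp

end Polynomial

namespace Dixmier

section Expression

variable {R : Type*} [CommRing R]

noncomputable def peExpr (c a b : R) (P Q : R[X]) : R[X] :=
  c • (P * Q) + a • (X * derivative P * Q) - b • (X * derivative Q * P)

theorem mul_peExpr_pow_mul (c a b : R) (u A G : R[X]) (N n : ℕ) :
    u * peExpr c a b (u ^ N * A) (u ^ n * G) =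
      u ^ (N + n) * ((a * N - b * n) • (X * derivative u * A * G) + u * peExpr c a b A G) := by
  simp only [peExpr, smul_eq_C_mul, C_sub, C_mul, map_natCast]
  linear_combination (C a * X * u ^ n * G) * mul_derivative_pow_mul u A N
    - (C b * X * u ^ N * A) * mul_derivative_pow_mul u G n

end Expression

theorem eq_zero_and_eq_zero_of_mul_eq_of_le {k j m n : ℕ} {ε a b : ℚ} (hk : 0 < k)
    (hε : 0 < ε) (hb : 0 < b) (ha : a = j / k * b + ε) (hbal : a * (m * k : ℕ) = b * n)
    (hn : n ≤ j * m) : m = 0 ∧ n = 0 := by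
  have hk' : (0 : ℚ) < k := by exact_mod_cast hk
  have hn' : (n : ℚ) ≤ j * m := by exact_mod_cast hn
  have hbal' : b * n = b * (j * m) + ε * k * m := by
    rw [← hbal, ha]; push_cast; field_simp
  have hm : m = 0 := by
    by_contra hm
    have : (0 : ℚ) < m := by positivity
    nlinarith [mul_pos (mul_pos hε hk') this]
  subst hm
  simp_all

section Multiplicity

variable {K : Type*} [Field K]

theorem exponent_of_eq_peExpr [CharZero K] {c a b : K} {u F G : K[X]} {h k j m n : ℕ}
    (hu : Irreducible u) (huX : ¬u ∣ X) (hF : ¬u ∣ F) (hG : ¬u ∣ G)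
    (heq : X ^ h * (u ^ m * F) ^ (k + j) = peExpr c a b ((u ^ m * F) ^ k) (u ^ n * G)) :
    n = j * m + 1 ∨ (a * (m * k : ℕ) = b * n ∧ n ≤ j * m) := by
  have hp := hu.prime
  set e := a * (m * k : ℕ) - b * n
  have hV : ¬u ∣ X ^ h * F ^ (k + j) := fun hd => by
    rcases hp.dvd_mul.mp hd with hd | hd
    exacts [huX (hp.dvd_of_dvd_pow hd), hF (hp.dvd_of_dvd_pow hd)]
  have key : u ^ ((k + j) * m + 1) * (X ^ h * F ^ (k + j)) =
      u ^ (m * k + n) * (e • (X * derivative u * F ^ k * G) + u * peExpr c a b (F ^ k) G) := by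
    rw [← mul_peExpr_pow_mul, pow_mul, ← mul_pow, ← heq]
    ring
  by_cases he : e = 0
  · right
    refine ⟨sub_eq_zero.mp he, ?_⟩
    have key' : u ^ ((k + j) * m + 1) * (X ^ h * F ^ (k + j)) =
        u ^ (m * k + n + 1) * peExpr c a b (F ^ k) G := by
      rw [key, he, zero_smul, zero_add, pow_succ]; ring
    have := hp.le_of_pow_mul_eq_pow_mul hV key'
    nlinarith
  · left
    have hW : ¬u ∣ e • (X * derivative u * F ^ k * G) + u * peExpr c a b (F ^ k) G := by
      rw [dvd_add_left (dvd_mul_right u _), smul_eq_C_mul,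
        (isUnit_C.mpr (isUnit_iff_ne_zero.mpr he)).dvd_mul_left]
      simp only [hp.dvd_mul, hu.not_dvd_derivative, huX, hG, or_false, false_or]
      exact fun hd => hF (hp.dvd_of_dvd_pow hd)
    have h1 := hp.le_of_pow_mul_eq_pow_mul hV key
    have h2 := hp.le_of_pow_mul_eq_pow_mul hW key.symm
    nlinarith

theorem multiplicity_eq_of_eq_peExpr [CharZero K] {k j h : ℕ} {ε c a b : ℚ} {f g u : K[X]}
    (hk : 0 < k) (hε : 0 < ε) (hb : 0 < b) (ha : a = j / k * b + ε)
    (hf : f ≠ 0) (hg : g ≠ 0) (hf0 : f.eval 0 ≠ 0) (hg0 : g.eval 0 ≠ 0)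
    (heq : X ^ h * f ^ (k + j) =
      peExpr (algebraMap ℚ K c) (algebraMap ℚ K a) (algebraMap ℚ K b) (f ^ k) g)
    (hu : Irreducible u) (hufg : u ∣ f ∨ u ∣ g) :
    multiplicity u g = j * multiplicity u f + 1 := by
  have huX : ¬u ∣ X := hufg.elim (hu.not_dvd_X_of_dvd hf0) (hu.not_dvd_X_of_dvd hg0)
  obtain ⟨F, hfF, hF⟩ :=
    (FiniteMultiplicity.of_not_isUnit hu.not_isUnit hf).exists_eq_pow_mul_and_not_dvd
  obtain ⟨G, hgG, hG⟩ :=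
    (FiniteMultiplicity.of_not_isUnit hu.not_isUnit hg).exists_eq_pow_mul_and_not_dvd
  rw [hfF, hgG] at heq
  rcases exponent_of_eq_peExpr hu huX hF hG heq with hn | ⟨hbal, hn⟩
  · exact hn
  rw [← map_natCast (algebraMap ℚ K), ← map_natCast (algebraMap ℚ K), ← map_mul, ← map_mul]
    at hbal
  obtain ⟨hm0, hn0⟩ :=
    eq_zero_and_eq_zero_of_mul_eq_of_le hk hε hb ha ((algebraMap ℚ K).injective hbal) hn
  rw [multiplicity_eq_zero] at hm0 hn0
  tauto

theorem count_normalizedFactors_eq_of_multiplicity {j : ℕ} {f g : K[X]} (hf : f ≠ 0)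
    (hg : g ≠ 0)
    (hmult : ∀ u, Irreducible u → u ∣ f ∨ u ∣ g → multiplicity u g = j * multiplicity u f + 1)
    {p : K[X]} (hp : p ∈ normalizedFactors (f * g)) :
    (normalizedFactors g).count p = j * (normalizedFactors f).count p + 1 := by
  obtain ⟨hirr, hmonic, hpfg⟩ := (Polynomial.mem_normalizedFactors_iff (mul_ne_zero hf hg)).mp hp
  have := hmult p hirr (hirr.prime.dvd_mul.mp hpfg)
  rwa [multiplicity_eq_count_normalizedFactors hirr hf,
    multiplicity_eq_count_normalizedFactors hirr hg, hmonic.normalize_eq_self] at this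

theorem exists_squarefree_of_count_normalizedFactors {j : ℕ} {f g : K[X]} (hf : f ≠ 0)
    (hg : g ≠ 0) (hcount : ∀ p ∈ normalizedFactors (f * g),
      (normalizedFactors g).count p = j * (normalizedFactors f).count p + 1) :
    ∃ gbar : K[X], Squarefree gbar ∧ g = f ^ j * gbar ∧
      (normalizedFactors f).toFinset.card ≤ gbar.natDegree := by
  have hmem {x : K[X]} (hx : x ≠ 0) (hxfg : x ∣ f * g) {p : K[X]}
      (hp : p ∈ normalizedFactors x) : p ∈ normalizedFactors (f * g) :=
    Multiset.mem_of_le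
      ((dvd_iff_normalizedFactors_le_normalizedFactors hx (mul_ne_zero hf hg)).mp hxfg) hp
  obtain ⟨gbar, rfl⟩ : f ^ j ∣ g := by
    rw [dvd_iff_normalizedFactors_le_normalizedFactors (pow_ne_zero j hf) hg,
      Multiset.le_iff_count]
    intro p
    rw [normalizedFactors_pow, Multiset.count_nsmul]
    by_cases hp : p ∈ normalizedFactors f
    · rw [hcount p (hmem hf (dvd_mul_right f _) hp)]
      omega
    · simp [Multiset.count_eq_zero_of_notMem hp]
  have hgbar : gbar ≠ 0 := right_ne_zero_of_mul hg
  have hcount_gbar {p : K[X]} (hp : p ∈ normalizedFactors (f * (f ^ j * gbar))) :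
      (normalizedFactors gbar).count p = 1 := by
    have := hcount p hp
    rw [normalizedFactors_mul (pow_ne_zero j hf) hgbar, Multiset.count_add,
      normalizedFactors_pow, Multiset.count_nsmul] at this
    omega
  refine ⟨gbar, ?_, rfl, ?_⟩
  · rw [squarefree_iff_nodup_normalizedFactors hgbar, Multiset.nodup_iff_count_le_one]
    intro p
    by_cases hp : p ∈ normalizedFactors gbar
    · rw [hcount_gbar (hmem hgbar (dvd_mul_of_dvd_right (dvd_mul_left _ _) _) hp)]
    · simp [Multiset.count_eq_zero_of_notMem hp]
  · have hsub : (normalizedFactors f).toFinset ⊆ (normalizedFactors gbar).toFinset := by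
      intro p hp
      rw [Multiset.mem_toFinset] at hp ⊢
      rw [← Multiset.count_pos, hcount_gbar (hmem hf (dvd_mul_right f _) hp)]
      exact one_pos
    calc (normalizedFactors f).toFinset.card
        ≤ (normalizedFactors gbar).toFinset.card := Finset.card_le_card hsub
      _ ≤ Multiset.card (normalizedFactors gbar) := Multiset.toFinset_card_le _
      _ ≤ gbar.natDegree := card_normalizedFactors_le_natDegree gbar

end Multiplicity

theorem PE_multiplicity (K : Type*) [Field K] [CharZero K]
    (k : ℕ) (hk : 0 < k) (j : ℕ) (ε b : ℚ) (hε : 0 < ε) (hb : 0 < b)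
    (c a : ℚ) (ha : a = (j : ℚ) / (k : ℚ) * b + ε)
    (f g : Polynomial K) (hf : f ≠ 0) (hg : g ≠ 0)
    (hf0 : Polynomial.eval 0 f ≠ 0) (hg0 : Polynomial.eval 0 g ≠ 0)
    (heq : ∃ h : ℕ,
      Polynomial.X ^ h * f ^ (k + j) =
        algebraMap ℚ K c • (f ^ k * g) +
          algebraMap ℚ K a • (Polynomial.X * Polynomial.derivative (f ^ k) * g) -
          algebraMap ℚ K b • (Polynomial.X * Polynomial.derivative g * f ^ k)) :
    (∀ u : Polynomial K, Irreducible u → u ∣ f →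
      ∀ m : ℕ, u ^ m ∣ f → ¬ u ^ (m + 1) ∣ f →
        u ^ (j * m + 1) ∣ g ∧ ¬ u ^ (j * m + 2) ∣ g) ∧
    (∃ gbar : Polynomial K, Squarefree gbar ∧ g = f ^ j * gbar ∧
      (UniqueFactorizationMonoid.normalizedFactors f).toFinset.card ≤ gbar.natDegree) := by
  obtain ⟨h, heq⟩ := heq
  have hmult (u : K[X]) (hu : Irreducible u) (hufg : u ∣ f ∨ u ∣ g) :
      multiplicity u g = j * multiplicity u f + 1 :=
    multiplicity_eq_of_eq_peExpr hk hε hb ha hf hg hf0 hg0 heq hu hufg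
  refine ⟨fun u hu huf m hm hm1 => ?_, exists_squarefree_of_count_normalizedFactors hf hg
    fun p hp => count_normalizedFactors_eq_of_multiplicity hf hg hmult hp⟩
  have hfin := FiniteMultiplicity.of_not_isUnit hu.not_isUnit hg
  exact hfin.multiplicity_eq_iff.mp
    (by rw [hmult u hu (.inl huf), multiplicity_eq_of_dvd_of_not_dvd hm hm1])

end Dixmier
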